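/- arXiv:2111.07878 — 5 statements merged into one kernel-verified Lean document; each statement's English description precedes it below -/
import Mathlib

section
/- If M is a symmetric positive semidefinite n×n matrix whose largest eigenvalue is at most λ, and 0 ≤ ξ := λ < 1, then for every vector α, αᵀ(I + A + M)⁻¹α ≥ (1 − ξ)·αᵀ(I + A)⁻¹α, where A is any symmetric positive semidefinite matrix. Equivalently, (I + A + M)⁻¹ ⪰ (1 − ξ)(I + A)⁻¹ in the Loewner order. -/
open Matrix

/-- If `M` is symmetric PSD with largest eigenvalue at most `ξ`, `0 ≤ ξ < 1`, and `A` is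
symmetric PSD, then `(I + A + M)⁻¹ ⪰ (1 − ξ)(I + A)⁻¹` in the Loewner order. -/
theorem loewner_inv_perturbation {n : ℕ}
    (A M : Matrix (Fin n) (Fin n) ℝ) (ξ : ℝ)
    (hA : A.PosSemidef) (hM : M.PosSemidef)
    (hMbound : ∀ x : Fin n → ℝ, x ⬝ᵥ (M *ᵥ x) ≤ ξ * (x ⬝ᵥ x))
    (hξ0 : 0 ≤ ξ) (hξ1 : ξ < 1) :
    ((1 + A + M)⁻¹ - (1 - ξ) • (1 + A)⁻¹).PosSemidef := by
  set B : Matrix (Fin n) (Fin n) ℝ := 1 + A with hB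
  set C : Matrix (Fin n) (Fin n) ℝ := 1 + A + M with hC
  have hBpd : B.PosDef := Matrix.PosDef.one.add_posSemidef hA
  have hCpd : C.PosDef := hBpd.add_posSemidef hM
  have hBinv : B * B⁻¹ = 1 :=
    Matrix.mul_nonsing_inv _ ((Matrix.isUnit_iff_isUnit_det _).mp hBpd.isUnit)
  have hCinv : C * C⁻¹ = 1 :=
    Matrix.mul_nonsing_inv _ ((Matrix.isUnit_iff_isUnit_det _).mp hCpd.isUnit)
  have hBH : B⁻¹ᴴ = B⁻¹ := hBpd.inv.posSemidef.isHermitian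
  have hCH : C⁻¹ᴴ = C⁻¹ := hCpd.inv.posSemidef.isHermitian
  have hBt : Bᵀ = B := by
    rw [← Matrix.conjTranspose_eq_transpose_of_trivial]; exact hBpd.isHermitian
  have hCt : Cᵀ = C := by
    rw [← Matrix.conjTranspose_eq_transpose_of_trivial]; exact hCpd.isHermitian
  refine posSemidef_iff_dotProduct_mulVec.mpr ⟨?_, fun x => ?_⟩
  · show (C⁻¹ - (1 - ξ) • B⁻¹)ᴴ = _
    rw [conjTranspose_sub, conjTranspose_smul, hBH, hCH, star_trivial]
  simp only [star_trivial]
  set u : Fin n → ℝ := C⁻¹ *ᵥ x with hu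
  set v : Fin n → ℝ := B⁻¹ *ᵥ x with hv
  have hCu : C *ᵥ u = x := by rw [hu, mulVec_mulVec, hCinv, one_mulVec]
  have hBv : B *ᵥ v = x := by rw [hv, mulVec_mulVec, hBinv, one_mulVec]
  have hsym : ∀ y z : Fin n → ℝ, y ⬝ᵥ (C *ᵥ z) = z ⬝ᵥ (C *ᵥ y) := by
    intro y z
    rw [dotProduct_mulVec, ← mulVec_transpose, hCt, dotProduct_comm]
  set a : ℝ := u ⬝ᵥ (C *ᵥ u) with ha
  set b : ℝ := v ⬝ᵥ (B *ᵥ v) with hbdef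
  have hbnn : 0 ≤ b := hBpd.posSemidef.dotProduct_mulVec_nonneg v
  have hann : 0 ≤ a := hCpd.posSemidef.dotProduct_mulVec_nonneg u
  have hvCu : v ⬝ᵥ (C *ᵥ u) = b := by rw [hCu, hbdef, hBv]
  have hvCv : v ⬝ᵥ (C *ᵥ v) ≤ (1 + ξ) * b := by
    have h1 : v ⬝ᵥ (C *ᵥ v) = b + v ⬝ᵥ (M *ᵥ v) := by
      rw [hbdef, hC, hB, add_mulVec, dotProduct_add]
    have h2 : v ⬝ᵥ (M *ᵥ v) ≤ ξ * (v ⬝ᵥ v) := hMbound v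
    have h3 : v ⬝ᵥ v ≤ b := by
      rw [hbdef, hB, add_mulVec, dotProduct_add, one_mulVec]
      have := hA.dotProduct_mulVec_nonneg v
      simp only [star_trivial] at this
      linarith
    nlinarith
  have hkey : 0 ≤ (v - (1 + ξ) • u) ⬝ᵥ (C *ᵥ (v - (1 + ξ) • u)) := by
    have := hCpd.posSemidef.dotProduct_mulVec_nonneg (v - (1 + ξ) • u)
    simpa using this
  have hexp : (v - (1 + ξ) • u) ⬝ᵥ (C *ᵥ (v - (1 + ξ) • u))
      = v ⬝ᵥ (C *ᵥ v) - 2 * (1 + ξ) * b + (1 + ξ)^2 * a := by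
    have h1 : u ⬝ᵥ (C *ᵥ v) = b := by rw [hsym]; exact hvCu
    simp only [mulVec_sub, mulVec_smul, sub_dotProduct, dotProduct_sub,
      smul_dotProduct, dotProduct_smul, smul_eq_mul, h1, hvCu, ← ha]
    ring
  rw [hexp] at hkey
  have hineq : (1 + ξ) * b ≤ (1 + ξ)^2 * a := by nlinarith
  have hgoal : (1 - ξ) * b ≤ a := by
    nlinarith [hineq, hbnn, sq_nonneg (1 + ξ),
      mul_nonneg (mul_nonneg hξ0 hξ0) hbnn,
      mul_nonneg (mul_nonneg (mul_nonneg hξ0 hξ0) hξ0) hbnn]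
  have hquad : x ⬝ᵥ ((C⁻¹ - (1 - ξ) • B⁻¹) *ᵥ x) = a - (1 - ξ) * b := by
    rw [sub_mulVec, dotProduct_sub, smul_mulVec, dotProduct_smul]
    have h1 : x ⬝ᵥ (C⁻¹ *ᵥ x) = a := by rw [← hu, ha, ← hCu, hsym, hCu]; exact dotProduct_comm x u
    have h2 : x ⬝ᵥ (B⁻¹ *ᵥ x) = b := by rw [← hv, hbdef, ← hBv]; rw [hBv, dotProduct_comm]
    rw [h1, h2]
    simp
  rw [hquad]
  linarith
end

section
/- For a symmetric positive semidefinite n×n matrix S with eigenvalues d_i, and scalars 0 < τ₀² < τ₁², λ_max a bound with d_i ≤ λ_max for all i, one has for each eigenvalue d_i: 1/(τ₁⁻² + d_i) − 1/(τ₀⁻² + d_i) ≥ (1 − w)/(τ₁⁻² + d_i), where w = 1 − (1 − τ₀²/τ₁²)/(1 + τ₀² λ_max). -/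
/-- Scalar eigenvalue inequality underlying Lemma A1(ii): for `0 < τ₀² < τ₁²`,
`0 ≤ d ≤ lamMax`, one has `1/(τ₁⁻² + d) − 1/(τ₀⁻² + d) ≥ (1 − w)/(τ₁⁻² + d)` where
`w = 1 − (1 − τ₀²/τ₁²)/(1 + τ₀² lamMax)`. -/
theorem scalar_shrinkage_eigenvalue_ineq
    (τ0sq τ1sq d lamMax : ℝ)
    (hτ0 : 0 < τ0sq) (hτ01 : τ0sq < τ1sq)
    (hd0 : 0 ≤ d) (hdmax : d ≤ lamMax) :
    1 / (τ1sq⁻¹ + d) - 1 / (τ0sq⁻¹ + d) ≥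
      (1 - (1 - (1 - τ0sq / τ1sq) / (1 + τ0sq * lamMax))) / (τ1sq⁻¹ + d) := by
  have hτ1 : 0 < τ1sq := hτ0.trans hτ01
  have hA : 0 < τ1sq⁻¹ + d := by positivity
  have hB : 0 < τ0sq⁻¹ + d := by positivity
  have hlam : 0 ≤ lamMax := hd0.trans hdmax
  have hC : 0 < 1 + τ0sq * lamMax := by positivity
  have key : 0 ≤ (lamMax - d) * (τ1sq - τ0sq) := by nlinarith
  rw [ge_iff_le, ← sub_nonneg]
  have expand : 1 / (τ1sq⁻¹ + d) - 1 / (τ0sq⁻¹ + d) -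
      (1 - (1 - (1 - τ0sq / τ1sq) / (1 + τ0sq * lamMax))) / (τ1sq⁻¹ + d)
      = ((lamMax - d) * (τ1sq - τ0sq)) * τ0sq /
        ((τ1sq⁻¹ + d) * (τ0sq⁻¹ + d) * (1 + τ0sq * lamMax) * τ1sq * (τ0sq * τ1sq)) * τ1sq := by
    field_simp
    ring
  rw [expand]
  positivity
end

section
/- Matrix shrinkage comparison: let A ⪰ I be a symmetric positive definite n×n matrix, X an n×k real matrix, and 0 < τ₀² < τ₁². Then (A + τ₀² X Xᵀ)⁻¹ − (A + τ₁² X Xᵀ)⁻¹ ⪰ (1 − w)(A⁻¹ − (A + τ₁² X Xᵀ)⁻¹), where w = 1 − (1 − τ₀²/τ₁²)/(1 + τ₀² λ_max) and λ_max bounds the largest eigenvalue of Xᵀ A⁻¹ X. -/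
open Matrix

section helpers
variable {m : Type*} [Fintype m] [DecidableEq m]

lemma myIsHermitian_smul {a : ℝ} {M : Matrix m m ℝ} (hM : M.IsHermitian) :
    (a • M).IsHermitian := by
  unfold Matrix.IsHermitian at *
  rw [conjTranspose_smul, hM, star_trivial]

lemma myPosSemidef_smul {a : ℝ} {M : Matrix m m ℝ} (hM : M.PosSemidef) (ha : 0 ≤ a) :
    (a • M).PosSemidef := by
  refine PosSemidef.of_dotProduct_mulVec_nonneg (myIsHermitian_smul hM.1) fun x => ?_
  have := hM.dotProduct_mulVec_nonneg x
  simpa [smul_mulVec, dotProduct_smul, smul_eq_mul] using mul_nonneg ha this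

lemma myPosDef_smul {a : ℝ} {M : Matrix m m ℝ} (hM : M.PosDef) (ha : 0 < a) :
    (a • M).PosDef := by
  refine PosDef.of_dotProduct_mulVec_pos (myIsHermitian_smul hM.1) fun x hx => ?_
  have := hM.dotProduct_mulVec_pos hx
  simpa [smul_mulVec, dotProduct_smul, smul_eq_mul] using mul_pos ha this

/-- Inverse is antitone on positive definite matrices. -/
lemma myInv_sub_inv_posSemidef {P Q : Matrix m m ℝ} (hP : P.PosDef) (hQ : Q.PosDef)
    (h : (Q - P).PosSemidef) : (P⁻¹ - Q⁻¹).PosSemidef := by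
  open scoped MatrixOrder in set R := CFC.sqrt Q with hRdef
  open scoped MatrixOrder in have hRpsd : R.PosSemidef := (CFC.sqrt_nonneg Q).posSemidef
  open scoped MatrixOrder in have hRR : R * R = Q := CFC.sqrt_mul_sqrt_self Q hQ.posSemidef.nonneg
  have hdet : IsUnit R.det := by
    have h2 : R.det * R.det = Q.det := by rw [← det_mul, hRR]
    refine isUnit_iff_ne_zero.mpr fun h0 => ?_
    rw [h0, mul_zero] at h2
    exact hQ.det_pos.ne' h2.symm
  have hRiR : R⁻¹ * R = 1 := nonsing_inv_mul R hdet
  have hRRi : R * R⁻¹ = 1 := mul_nonsing_inv R hdet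
  have hRiH : (R⁻¹)ᴴ = R⁻¹ := hRpsd.inv.1
  set G := R⁻¹ * P * R⁻¹ with hGdef
  have hGpsd : G.PosSemidef := by
    have := hP.posSemidef.mul_mul_conjTranspose_same R⁻¹
    rwa [hRiH] at this
  have hGdet : IsUnit G.det := by
    have hRi : R⁻¹.det * R.det = 1 := by rw [← det_mul, hRiR, det_one]
    have h1 : R⁻¹.det ≠ 0 := left_ne_zero_of_mul_eq_one hRi
    have : G.det = R⁻¹.det * P.det * R⁻¹.det := by rw [hGdef, det_mul, det_mul]
    rw [isUnit_iff_ne_zero, this]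
    exact mul_ne_zero (mul_ne_zero h1 hP.det_pos.ne') h1
  open scoped MatrixOrder in set Gs := CFC.sqrt G with hGsdef
  open scoped MatrixOrder in have hGspsd : Gs.PosSemidef := (CFC.sqrt_nonneg G).posSemidef
  open scoped MatrixOrder in have hGsGs : Gs * Gs = G := CFC.sqrt_mul_sqrt_self G hGpsd.nonneg
  have hGsdet : IsUnit Gs.det := by
    have h2 : Gs.det * Gs.det = G.det := by rw [← det_mul, hGsGs]
    refine isUnit_iff_ne_zero.mpr fun h0 => ?_
    rw [h0, mul_zero] at h2
    exact (isUnit_iff_ne_zero.mp hGdet) h2.symm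
  have hGsiH : (Gs⁻¹)ᴴ = Gs⁻¹ := hGspsd.inv.1
  have hGsiGs : Gs⁻¹ * Gs = 1 := nonsing_inv_mul Gs hGsdet
  have hGsGsi : Gs * Gs⁻¹ = 1 := mul_nonsing_inv Gs hGsdet
  -- Step 1 : 1 - G is psd
  have h1G : (1 - G).PosSemidef := by
    have h1 := h.mul_mul_conjTranspose_same R⁻¹
    rw [hRiH] at h1
    have : R⁻¹ * (Q - P) * R⁻¹ = 1 - G := by
      rw [Matrix.mul_sub, Matrix.sub_mul, ← hRR, hGdef]
      congr 1
      rw [show R⁻¹ * (R * R) * R⁻¹ = (R⁻¹ * R) * (R * R⁻¹) by noncomm_ring, hRiR, hRRi, one_mul]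
    rwa [this] at h1
  -- Step 2 : G⁻¹ - 1 is psd
  have h2G : (G⁻¹ - 1).PosSemidef := by
    have h2 := h1G.mul_mul_conjTranspose_same Gs⁻¹
    rw [hGsiH] at h2
    have : Gs⁻¹ * (1 - G) * Gs⁻¹ = G⁻¹ - 1 := by
      rw [Matrix.mul_sub, Matrix.sub_mul, Matrix.mul_one]
      congr 1
      · rw [← hGsGs, Matrix.mul_inv_rev]
      · rw [← hGsGs, show Gs⁻¹ * (Gs * Gs) * Gs⁻¹ = (Gs⁻¹ * Gs) * (Gs * Gs⁻¹) by noncomm_ring,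
          hGsiGs, hGsGsi, one_mul]
    rwa [this] at h2
  -- Step 3 : conjugate back
  have h3 := h2G.mul_mul_conjTranspose_same R⁻¹
  rw [hRiH] at h3
  have : R⁻¹ * (G⁻¹ - 1) * R⁻¹ = P⁻¹ - Q⁻¹ := by
    rw [Matrix.mul_sub, Matrix.sub_mul, Matrix.mul_one]
    congr 1
    · rw [hGdef, Matrix.mul_inv_rev, Matrix.mul_inv_rev, nonsing_inv_nonsing_inv R hdet]
      rw [show R⁻¹ * (R * (P⁻¹ * R)) * R⁻¹ = (R⁻¹ * R) * P⁻¹ * (R * R⁻¹) by noncomm_ring,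
        hRiR, hRRi, one_mul, Matrix.mul_one]
    · rw [← hRR, Matrix.mul_inv_rev]
  rwa [this] at h3

end helpers

/-- Matrix shrinkage comparison (Lemma A1(ii)): for symmetric `A ⪰ I`,
`(A + τ₀² X Xᵀ)⁻¹ − (A + τ₁² X Xᵀ)⁻¹ ⪰ (1 − w)(A⁻¹ − (A + τ₁² X Xᵀ)⁻¹)`,
where `w = 1 − (1 − τ₀²/τ₁²)/(1 + τ₀² lamMax)` and `lamMax` bounds the largest
eigenvalue of `Xᵀ A⁻¹ X`. -/
theorem matrix_shrinkage_comparison {n k : ℕ}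
    (A : Matrix (Fin n) (Fin n) ℝ) (X : Matrix (Fin n) (Fin k) ℝ)
    (τ0sq τ1sq lamMax : ℝ)
    (hAsymm : A.IsHermitian) (hA : (A - 1).PosSemidef) (hApd : A.PosDef)
    (hτ0 : 0 < τ0sq) (hτ01 : τ0sq < τ1sq)
    (hlam : ∀ v : Fin k → ℝ, v ⬝ᵥ ((Xᵀ * A⁻¹ * X) *ᵥ v) ≤ lamMax * (v ⬝ᵥ v)) :
    (((A + τ0sq • (X * Xᵀ))⁻¹ - (A + τ1sq • (X * Xᵀ))⁻¹) -
      (1 - (1 - (1 - τ0sq / τ1sq) / (1 + τ0sq * lamMax))) •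
        (A⁻¹ - (A + τ1sq • (X * Xᵀ))⁻¹)).PosSemidef := by
  rcases Nat.eq_zero_or_pos k with hk | hk
  · subst hk
    have hX0 : X * Xᵀ = 0 := by
      ext i j
      simp [Matrix.mul_apply]
    rw [hX0]
    simpa using Matrix.PosSemidef.zero
  -- main case
  have hτ1 : 0 < τ1sq := hτ0.trans hτ01
  have hAdet : IsUnit A.det := isUnit_iff_ne_zero.mpr hApd.det_pos.ne'
  have hAunit : IsUnit A := (isUnit_iff_isUnit_det A).mpr hAdet
  have hAinv : A⁻¹.PosDef := hApd.inv
  have hSpsd : (Xᵀ * A⁻¹ * X).PosSemidef := by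
    have := hAinv.posSemidef.mul_mul_conjTranspose_same Xᵀ
    rwa [conjTranspose_eq_transpose_of_trivial, transpose_transpose] at this
  have hlam0 : 0 ≤ lamMax := by
    obtain ⟨i⟩ : Nonempty (Fin k) := Fin.pos_iff_nonempty.mp hk
    have h1 := hlam (Pi.single i 1)
    have h2 := hSpsd.dotProduct_mulVec_nonneg (Pi.single i 1)
    rw [star_trivial] at h2
    have h3 : (Pi.single i 1 : Fin k → ℝ) ⬝ᵥ (Pi.single i 1) = 1 := by
      simp [dotProduct, Pi.single_apply]
    rw [h3, mul_one] at h1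
    linarith
  have hden : (0:ℝ) < 1 + τ0sq * lamMax := by positivity
  set c : ℝ := (1 - τ0sq / τ1sq) / (1 + τ0sq * lamMax) with hc
  have hcpos : 0 < c :=
    div_pos (sub_pos.mpr ((div_lt_one hτ1).mpr hτ01)) hden
  have hc1 : c < 1 := by
    rw [hc, div_lt_one hden]
    have h4 : 0 < τ0sq / τ1sq := div_pos hτ0 hτ1
    nlinarith [mul_nonneg hτ0.le hlam0]
  have h1c : 0 < 1 - c := sub_pos.mpr hc1
  -- positive definiteness of the inner matrices
  have hTpd : (τ1sq⁻¹ • (1 : Matrix (Fin k) (Fin k) ℝ) + Xᵀ * A⁻¹ * X).PosDef :=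
    (myPosDef_smul Matrix.PosDef.one (inv_pos.mpr hτ1)).add_posSemidef hSpsd
  have hUpd : (τ0sq⁻¹ • (1 : Matrix (Fin k) (Fin k) ℝ) + Xᵀ * A⁻¹ * X).PosDef :=
    (myPosDef_smul Matrix.PosDef.one (inv_pos.mpr hτ0)).add_posSemidef hSpsd
  have hTdet : IsUnit (τ1sq⁻¹ • (1 : Matrix (Fin k) (Fin k) ℝ) + Xᵀ * A⁻¹ * X).det :=
    isUnit_iff_ne_zero.mpr hTpd.det_pos.ne'
  -- Woodbury identity
  have woodbury : ∀ τ : ℝ, 0 < τ →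
      (τ⁻¹ • (1 : Matrix (Fin k) (Fin k) ℝ) + Xᵀ * A⁻¹ * X).PosDef →
      (A + τ • (X * Xᵀ))⁻¹ =
        A⁻¹ - A⁻¹ * X * (τ⁻¹ • (1 : Matrix (Fin k) (Fin k) ℝ) + Xᵀ * A⁻¹ * X)⁻¹ * Xᵀ * A⁻¹ := by
    intro τ hτ hpd
    have hC : (τ • (1 : Matrix (Fin k) (Fin k) ℝ)) * (τ⁻¹ • 1) = 1 := by
      rw [smul_mul_smul_comm, one_mul, mul_inv_cancel₀ hτ.ne', one_smul]
    have hCinv : (τ • (1 : Matrix (Fin k) (Fin k) ℝ))⁻¹ = τ⁻¹ • 1 :=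
      inv_eq_right_inv hC
    have hXC : X * (τ • (1 : Matrix (Fin k) (Fin k) ℝ)) * Xᵀ = τ • (X * Xᵀ) := by
      rw [Matrix.mul_smul, Matrix.mul_one, Matrix.smul_mul]
    have hCunit : IsUnit (τ • (1 : Matrix (Fin k) (Fin k) ℝ)) := by
      rw [Matrix.isUnit_iff_isUnit_det, isUnit_iff_ne_zero, Matrix.det_smul, Matrix.det_one,
        mul_one]
      exact pow_ne_zero _ hτ.ne'
    have hACunit : IsUnit ((τ • (1 : Matrix (Fin k) (Fin k) ℝ))⁻¹ + Xᵀ * A⁻¹ * X) := by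
      rw [hCinv]
      exact (isUnit_iff_isUnit_det _).mpr (isUnit_iff_ne_zero.mpr hpd.det_pos.ne')
    rw [← hXC, add_mul_mul_inv_eq_sub A X (τ • 1) Xᵀ hAunit hCunit hACunit, hCinv]
  have w0 := woodbury τ0sq hτ0 hUpd
  have w1 := woodbury τ1sq hτ1 hTpd
  -- the middle factor is psd
  have hPpd : ((1-c)⁻¹ • (τ1sq⁻¹ • (1 : Matrix (Fin k) (Fin k) ℝ) + Xᵀ * A⁻¹ * X)).PosDef :=
    myPosDef_smul hTpd (inv_pos.mpr h1c)
  have hPinv : ((1-c)⁻¹ • (τ1sq⁻¹ • (1 : Matrix (Fin k) (Fin k) ℝ) + Xᵀ * A⁻¹ * X))⁻¹ =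
      (1-c) • (τ1sq⁻¹ • (1 : Matrix (Fin k) (Fin k) ℝ) + Xᵀ * A⁻¹ * X)⁻¹ := by
    refine inv_eq_right_inv ?_
    rw [smul_mul_smul_comm, inv_mul_cancel₀ h1c.ne',
      mul_nonsing_inv _ hTdet, one_smul]
  have e1' : (1-c) * τ0sq⁻¹ - τ1sq⁻¹ = c * lamMax := by
    rw [hc]
    field_simp
    ring
  have e1 : τ0sq⁻¹ - (1-c)⁻¹ * τ1sq⁻¹ = (1-c)⁻¹ * (c * lamMax) := by
    rw [← e1', mul_sub, ← mul_assoc, inv_mul_cancel₀ h1c.ne', one_mul]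
  have e2 : (1 - (1-c)⁻¹ : ℝ) = -((1-c)⁻¹ * c) := by
    field_simp
    ring
  have hQP : ((τ0sq⁻¹ • (1 : Matrix (Fin k) (Fin k) ℝ) + Xᵀ * A⁻¹ * X) -
      (1-c)⁻¹ • (τ1sq⁻¹ • (1 : Matrix (Fin k) (Fin k) ℝ) + Xᵀ * A⁻¹ * X)).PosSemidef := by
    have key : (τ0sq⁻¹ • (1 : Matrix (Fin k) (Fin k) ℝ) + Xᵀ * A⁻¹ * X) -
        (1-c)⁻¹ • (τ1sq⁻¹ • (1 : Matrix (Fin k) (Fin k) ℝ) + Xᵀ * A⁻¹ * X) =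
        ((1-c)⁻¹ * c) • (lamMax • (1 : Matrix (Fin k) (Fin k) ℝ) - Xᵀ * A⁻¹ * X) := by
      have step : (τ0sq⁻¹ • (1 : Matrix (Fin k) (Fin k) ℝ) + Xᵀ * A⁻¹ * X) -
          (1-c)⁻¹ • (τ1sq⁻¹ • (1 : Matrix (Fin k) (Fin k) ℝ) + Xᵀ * A⁻¹ * X) =
          (τ0sq⁻¹ - (1-c)⁻¹ * τ1sq⁻¹) • (1 : Matrix (Fin k) (Fin k) ℝ) +
          (1 - (1-c)⁻¹) • (Xᵀ * A⁻¹ * X) := by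
        module
      rw [step, e1, e2]
      module
    rw [key]
    refine myPosSemidef_smul ?_ (by positivity)
    refine PosSemidef.of_dotProduct_mulVec_nonneg ((myIsHermitian_smul Matrix.isHermitian_one).sub hSpsd.1) fun x => ?_
    have hx := hlam x
    rw [star_trivial]
    simp only [sub_mulVec, dotProduct_sub, smul_mulVec, one_mulVec, dotProduct_smul,
      smul_eq_mul]
    linarith
  have hD : ((1-c) • (τ1sq⁻¹ • (1 : Matrix (Fin k) (Fin k) ℝ) + Xᵀ * A⁻¹ * X)⁻¹ -
      (τ0sq⁻¹ • (1 : Matrix (Fin k) (Fin k) ℝ) + Xᵀ * A⁻¹ * X)⁻¹).PosSemidef := by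
    have := myInv_sub_inv_posSemidef hPpd hUpd hQP
    rwa [hPinv] at this
  -- assemble
  have hBH : (A⁻¹ * X)ᴴ = Xᵀ * A⁻¹ := by
    have hAiT : (A⁻¹)ᵀ = A⁻¹ := by
      rw [← conjTranspose_eq_transpose_of_trivial]; exact hAinv.1
    rw [conjTranspose_mul, conjTranspose_eq_transpose_of_trivial,
      conjTranspose_eq_transpose_of_trivial, hAiT]
  have final := hD.mul_mul_conjTranspose_same (A⁻¹ * X)
  rw [hBH] at final
  have hEq : ((A + τ0sq • (X * Xᵀ))⁻¹ - (A + τ1sq • (X * Xᵀ))⁻¹) -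
      (1 - (1 - c)) • (A⁻¹ - (A + τ1sq • (X * Xᵀ))⁻¹) =
      (A⁻¹ * X) * ((1-c) • (τ1sq⁻¹ • (1 : Matrix (Fin k) (Fin k) ℝ) + Xᵀ * A⁻¹ * X)⁻¹ -
        (τ0sq⁻¹ • (1 : Matrix (Fin k) (Fin k) ℝ) + Xᵀ * A⁻¹ * X)⁻¹) * (Xᵀ * A⁻¹) := by
    rw [w0, w1]
    simp only [Matrix.mul_sub, Matrix.sub_mul, Matrix.mul_smul, Matrix.smul_mul,
      Matrix.mul_assoc, smul_sub, sub_smul, one_smul]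
    module
  rw [hEq]
  exact final
end

section
/- Ridge residual gap bound via SVD: let X = UΛVᵀ be the SVD of an n×k matrix X with full column rank, P = X(XᵀX)⁻¹Xᵀ, and H_τ = X(τ⁻² I + XᵀX)⁻¹Xᵀ for τ > 0. Then 0 ≤ yᵀ(P − H_τ)y ≤ (τ² λ_min)⁻¹ · yᵀ P y · (1/n) for all y, where λ_min is the minimum eigenvalue of XᵀX / n. In particular yᵀ(P − H_τ)y ≤ yᵀPy/(n τ² λ_min). -/
open Matrix

lemma symm_dot_aux {m : ℕ} {S : Matrix (Fin m) (Fin m) ℝ} (hS : S.IsHermitian)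
    (a b : Fin m → ℝ) : a ⬝ᵥ (S *ᵥ b) = (S *ᵥ a) ⬝ᵥ b := by
  rw [dotProduct_mulVec, ← mulVec_transpose, ← conjTranspose_eq_transpose_of_trivial, hS.eq]

/-- Ridge residual gap bound: for `X` of full column rank, `P = X(XᵀX)⁻¹Xᵀ`,
`H_τ = X(τ⁻² I + XᵀX)⁻¹Xᵀ` with `τ > 0`, and `lamMin > 0` the minimum eigenvalue of
`XᵀX/n`, one has `0 ≤ yᵀ(P − H_τ)y ≤ yᵀPy/(n τ² lamMin)` for all `y`. -/
theorem ridge_residual_gap_bound {n k : ℕ} (hn : 0 < n)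
    (X : Matrix (Fin n) (Fin k) ℝ) (τ lamMin : ℝ) (hτ : 0 < τ)
    (hX : (Xᵀ * X).PosDef) (hlamMin : 0 < lamMin)
    (hlam : ∀ v : Fin k → ℝ,
      lamMin * (v ⬝ᵥ v) ≤ v ⬝ᵥ (((n : ℝ)⁻¹ • (Xᵀ * X)) *ᵥ v)) :
    ∀ y : Fin n → ℝ,
      0 ≤ y ⬝ᵥ ((X * (Xᵀ * X)⁻¹ * Xᵀ - X * ((τ ^ 2)⁻¹ • 1 + Xᵀ * X)⁻¹ * Xᵀ) *ᵥ y) ∧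
      y ⬝ᵥ ((X * (Xᵀ * X)⁻¹ * Xᵀ - X * ((τ ^ 2)⁻¹ • 1 + Xᵀ * X)⁻¹ * Xᵀ) *ᵥ y) ≤
        y ⬝ᵥ ((X * (Xᵀ * X)⁻¹ * Xᵀ) *ᵥ y) / (n * τ ^ 2 * lamMin) := by
  intro y
  set s : ℝ := (τ ^ 2)⁻¹ with hs
  have hs0 : 0 < s := by positivity
  set A := Xᵀ * X with hAdef
  set B := s • (1 : Matrix (Fin k) (Fin k) ℝ) + A with hBdef
  have hA : A.PosDef := hX
  have hB : B.PosDef := by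
    refine Matrix.PosDef.posSemidef_add ?_ hA
    rw [Matrix.posSemidef_iff_dotProduct_mulVec]
    constructor
    · simp [Matrix.IsHermitian]
    · intro x
      have h1 : (s • (1 : Matrix (Fin k) (Fin k) ℝ)) *ᵥ x = s • x := by
        rw [Matrix.smul_mulVec, Matrix.one_mulVec]
      rw [h1]
      have : star x ⬝ᵥ (s • x) = s * (x ⬝ᵥ x) := by
        simp [dotProduct_smul, smul_eq_mul]
      rw [this]
      exact mul_nonneg hs0.le (Finset.sum_nonneg fun i _ => mul_self_nonneg _)
  have hAu : IsUnit A := hA.isUnit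
  have hBu : IsUnit B := hB.isUnit
  letI := hAu.invertible
  letI := hBu.invertible
  have hAA : A * A⁻¹ = 1 := Matrix.mul_inv_of_invertible A
  have hAA' : A⁻¹ * A = 1 := Matrix.inv_mul_of_invertible A
  have hBB : B * B⁻¹ = 1 := Matrix.mul_inv_of_invertible B
  have hBB' : B⁻¹ * B = 1 := Matrix.inv_mul_of_invertible B
  -- commuting inverses
  have hcomm : A⁻¹ * B⁻¹ = B⁻¹ * A⁻¹ := by
    have h1 : A * B = B * A := by
      simp [hBdef, Matrix.mul_add, Matrix.add_mul, Matrix.mul_smul, Matrix.smul_mul]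
    calc A⁻¹ * B⁻¹ = (B * A)⁻¹ := by rw [Matrix.mul_inv_rev]
    _ = (A * B)⁻¹ := by rw [h1]
    _ = B⁻¹ * A⁻¹ := by rw [Matrix.mul_inv_rev]
  have hAinvB : A⁻¹ * B = s • A⁻¹ + 1 := by
    rw [hBdef, Matrix.mul_add, Matrix.mul_smul, Matrix.mul_one, hAA']
  -- key identity 1 : A⁻¹ - B⁻¹ = s • (A⁻¹ * B⁻¹)
  have hkey1 : A⁻¹ - B⁻¹ = s • (A⁻¹ * B⁻¹) := by
    have : A⁻¹ * (B - A) * B⁻¹ = A⁻¹ - B⁻¹ := by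
      rw [Matrix.mul_sub, Matrix.sub_mul, Matrix.mul_assoc, hBB, Matrix.mul_one, hAA',
        Matrix.one_mul]
    rw [← this, hBdef]
    simp [Matrix.mul_smul, Matrix.smul_mul, Matrix.mul_assoc]
  -- key identity 2 : A⁻¹ * B⁻¹ = B⁻¹ * (s • A⁻¹ + 1) * B⁻¹
  have hkey2 : A⁻¹ * B⁻¹ = B⁻¹ * (s • A⁻¹ + 1) * B⁻¹ := by
    rw [← hAinvB, ← Matrix.mul_assoc, Matrix.mul_assoc (B⁻¹ * A⁻¹) B B⁻¹, hBB,
      Matrix.mul_one, hcomm]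
  -- quadratic form helper
  have quad : ∀ M : Matrix (Fin k) (Fin k) ℝ,
      y ⬝ᵥ ((X * M * Xᵀ) *ᵥ y) = (Xᵀ *ᵥ y) ⬝ᵥ (M *ᵥ (Xᵀ *ᵥ y)) := by
    intro M
    rw [← Matrix.mulVec_mulVec, ← Matrix.mulVec_mulVec, dotProduct_mulVec (R := ℝ) y,
      ← mulVec_transpose]
  set w := Xᵀ *ᵥ y with hw
  obtain ⟨u, hwu, hu⟩ : ∃ u, w = B *ᵥ u ∧ u = B⁻¹ *ᵥ w :=
    ⟨B⁻¹ *ᵥ w, by rw [Matrix.mulVec_mulVec, hBB, Matrix.one_mulVec], rfl⟩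
  have hBinvH : (B⁻¹).IsHermitian := hB.isHermitian.inv
  have hAinvH : (A⁻¹).IsHermitian := hA.isHermitian.inv
  have hAH : A.IsHermitian := hA.isHermitian
  set p := u ⬝ᵥ (A⁻¹ *ᵥ u) with hp
  set q := u ⬝ᵥ u with hq
  set r := u ⬝ᵥ (A *ᵥ u) with hr
  set c : ℝ := n * lamMin with hc
  have hc0 : 0 < c := by positivity
  -- p ≥ 0
  have hp0 : 0 ≤ p := by
    have := (hA.inv).posSemidef.dotProduct_mulVec_nonneg u
    simpa using this
  have hq0 : 0 ≤ q := by
    have : (0:ℝ) ≤ ∑ i, u i * u i := Finset.sum_nonneg fun i _ => mul_self_nonneg _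
    simpa [hq, dotProduct] using this
  -- c * q ≤ r
  have hcq : c * q ≤ r := by
    have h := hlam u
    rw [Matrix.smul_mulVec, dotProduct_smul] at h
    have hn' : (0:ℝ) < n := by exact_mod_cast hn
    rw [hc]
    calc n * lamMin * q = n * (lamMin * q) := by ring
    _ ≤ n * ((n:ℝ)⁻¹ • (u ⬝ᵥ (A *ᵥ u))) := by
        refine mul_le_mul_of_nonneg_left ?_ hn'.le
        simpa [hq] using h
    _ = r := by
        rw [hr, smul_eq_mul]
        field_simp
  -- c * p ≤ q
  have hcp : c * p ≤ q := by
    set v := A⁻¹ *ᵥ u with hv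
    have huv : u = A *ᵥ v := by
      rw [hv, Matrix.mulVec_mulVec, hAA, Matrix.one_mulVec]
    set z := A *ᵥ v - c • v with hz
    have hvz : 0 ≤ v ⬝ᵥ z := by
      have h := hlam v
      rw [Matrix.smul_mulVec, dotProduct_smul] at h
      have hn' : (0:ℝ) < n := by exact_mod_cast hn
      have h2 : c * (v ⬝ᵥ v) ≤ v ⬝ᵥ (A *ᵥ v) := by
        rw [smul_eq_mul] at h
        calc c * (v ⬝ᵥ v) = (n:ℝ) * (lamMin * (v ⬝ᵥ v)) := by rw [hc]; ring
        _ ≤ (n:ℝ) * ((n:ℝ)⁻¹ * (v ⬝ᵥ (A *ᵥ v))) := mul_le_mul_of_nonneg_left h hn'.le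
        _ = v ⬝ᵥ (A *ᵥ v) := by field_simp
      rw [hz, dotProduct_sub, dotProduct_smul, smul_eq_mul]
      linarith
    have hz0 : 0 ≤ z ⬝ᵥ z := Finset.sum_nonneg fun i _ => mul_self_nonneg _
    have hzv : z ⬝ᵥ v = v ⬝ᵥ z := dotProduct_comm _ _
    have hqexp : q = z ⬝ᵥ z + 2 * c * (v ⬝ᵥ z) + c^2 * (v ⬝ᵥ v) := by
      have : u = z + c • v := by rw [hz, huv]; ring_nf
      rw [hq, this]
      simp [dotProduct_add, add_dotProduct, dotProduct_smul, smul_dotProduct, hzv,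
        smul_eq_mul]
      ring
    have hpexp : p = v ⬝ᵥ z + c * (v ⬝ᵥ v) := by
      have hpv : p = u ⬝ᵥ v := by rw [hp, hv]
      have : u ⬝ᵥ v = (z + c • v) ⬝ᵥ v := by
        congr 1; rw [hz, huv]; ring_nf
      rw [hpv, this]
      simp [add_dotProduct, smul_dotProduct, smul_eq_mul, hzv]
    have hvv0 : 0 ≤ v ⬝ᵥ v := Finset.sum_nonneg fun i _ => mul_self_nonneg _
    nlinarith [hvz, hz0, hvv0]
  -- gap = s * (s * p + q)
  have hgap : y ⬝ᵥ ((X * A⁻¹ * Xᵀ - X * B⁻¹ * Xᵀ) *ᵥ y) = s * (s * p + q) := by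
    have hmat : X * A⁻¹ * Xᵀ - X * B⁻¹ * Xᵀ = X * (s • (A⁻¹ * B⁻¹)) * Xᵀ := by
      rw [← hkey1, Matrix.mul_sub, Matrix.sub_mul]
    rw [hmat, quad]
    rw [hkey2]
    rw [Matrix.smul_mulVec, dotProduct_smul, smul_eq_mul]
    congr 1
    have : (B⁻¹ * (s • A⁻¹ + 1) * B⁻¹) *ᵥ w = B⁻¹ *ᵥ ((s • A⁻¹ + 1) *ᵥ u) := by
      simp only [← Matrix.mulVec_mulVec, hu]
    rw [this, symm_dot_aux hBinvH, ← hu]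
    rw [Matrix.add_mulVec, Matrix.smul_mulVec, Matrix.one_mulVec, dotProduct_add,
      dotProduct_smul, smul_eq_mul, ← hp, ← hq]
  -- P-quadratic form
  have hP : y ⬝ᵥ ((X * A⁻¹ * Xᵀ) *ᵥ y) = s^2 * p + 2 * s * q + r := by
    rw [quad, hwu]
    rw [Matrix.mulVec_mulVec, ← symm_dot_aux hB.isHermitian, Matrix.mulVec_mulVec,
      hAinvB]
    have hBM : B * (s • A⁻¹ + 1) = (s^2) • A⁻¹ + (2*s) • 1 + A := by
      simp only [hBdef, Matrix.add_mul, Matrix.mul_add, Matrix.smul_mul, Matrix.mul_smul,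
        hAA, Matrix.one_mul, Matrix.mul_one, smul_smul]
      module
    rw [hBM]
    rw [Matrix.add_mulVec, Matrix.add_mulVec, Matrix.smul_mulVec,
      Matrix.smul_mulVec, Matrix.one_mulVec, dotProduct_add, dotProduct_add,
      dotProduct_smul, dotProduct_smul, smul_eq_mul, smul_eq_mul, ← hp, ← hq, ← hr]
  constructor
  · rw [hgap]
    exact mul_nonneg hs0.le (add_nonneg (mul_nonneg hs0.le hp0) hq0)
  · rw [hgap, hP]
    have hden : (0:ℝ) < n * τ^2 * lamMin := by positivity
    rw [le_div_iff₀ hden]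
    have hsτ : s * τ^2 = 1 := by rw [hs]; field_simp
    have heq : s * (s * p + q) * (↑n * τ ^ 2 * lamMin)
        = (s * (c * p) + c * q) * (s * τ^2) := by rw [hc]; ring
    rw [hsτ, mul_one] at heq
    rw [heq]
    have h1 : s * (c * p) ≤ s * q := mul_le_mul_of_nonneg_left hcp hs0.le
    nlinarith [mul_nonneg hs0.le hq0, mul_nonneg (mul_nonneg hs0.le hs0.le) hp0]
end

section
/- Chi-square concentration (Laurent–Massart): if Z ~ χ²_d, then for all x > 0, P(Z − d ≥ 2√(dx) + 2x) ≤ exp(−x) and P(d − Z ≥ 2√(dx)) ≤ exp(−x). -/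
open MeasureTheory ProbabilityTheory Real

section Aux

lemma measurable_gammaPDF (a r : ℝ) : Measurable (gammaPDF a r) :=
  (measurable_gammaPDFReal a r).ennreal_ofReal

lemma gamma_mgf {a r t : ℝ} (ha : 0 < a) (hr : 0 < r) (ht : t < r) :
    ∫⁻ z, ENNReal.ofReal (exp (t * z)) ∂(gammaMeasure a r)
      = ENNReal.ofReal ((r / (r - t)) ^ a) := by
  have hrt : 0 < r - t := by linarith
  have hm : Measurable fun z : ℝ => ENNReal.ofReal (exp (t * z)) := by fun_prop
  rw [gammaMeasure, lintegral_withDensity_eq_lintegral_mul _ (measurable_gammaPDF a r) hm]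
  have key : ∀ z : ℝ, (gammaPDF a r * fun z => ENNReal.ofReal (exp (t * z))) z
      = ENNReal.ofReal ((r / (r - t)) ^ a) * gammaPDF a (r - t) z := by
    intro z
    rcases lt_or_ge z 0 with hz | hz
    · simp [gammaPDF_of_neg hz]
    · rw [Pi.mul_apply, gammaPDF_of_nonneg hz, gammaPDF_of_nonneg hz,
        ← ENNReal.ofReal_mul (by positivity), ← ENNReal.ofReal_mul (by positivity)]
      congr 1
      have h1 : (r / (r - t)) ^ a * ((r - t) ^ a / Gamma a) = r ^ a / Gamma a := by
        rw [Real.div_rpow hr.le hrt.le]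
        field_simp
      have h2 : exp (-(r * z)) * exp (t * z) = exp (-((r - t) * z)) := by
        rw [← Real.exp_add]; ring_nf
      calc r ^ a / Gamma a * z ^ (a - 1) * exp (-(r * z)) * exp (t * z)
          = r ^ a / Gamma a * z ^ (a - 1) * (exp (-(r * z)) * exp (t * z)) := by ring
        _ = (r / (r - t)) ^ a * ((r - t) ^ a / Gamma a) * z ^ (a - 1) * exp (-((r - t) * z)) := by
            rw [h2, h1]
        _ = (r / (r - t)) ^ a * ((r - t) ^ a / Gamma a * z ^ (a - 1) * exp (-((r - t) * z))) := by
            ring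
  simp_rw [key]
  rw [lintegral_const_mul _ (measurable_gammaPDF a (r - t)),
    lintegral_gammaPDF_eq_one ha hrt, mul_one]

lemma gamma_upper_tail {a r t : ℝ} (ha : 0 < a) (hr : 0 < r) (ht0 : 0 ≤ t) (htr : t < r) (c : ℝ) :
    gammaMeasure a r {z | c ≤ z} ≤ ENNReal.ofReal (exp (-(t * c)) * (r / (r - t)) ^ a) := by
  have hm : Measurable fun z : ℝ => ENNReal.ofReal (exp (t * (z - c))) := by fun_prop
  calc gammaMeasure a r {z | c ≤ z}
      = ∫⁻ z in {z | c ≤ z}, 1 ∂(gammaMeasure a r) := (setLIntegral_one _).symm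
    _ ≤ ∫⁻ z in {z | c ≤ z}, ENNReal.ofReal (exp (t * (z - c))) ∂(gammaMeasure a r) := by
        refine setLIntegral_mono hm fun z hz => ?_
        exact ENNReal.one_le_ofReal.mpr (Real.one_le_exp (mul_nonneg ht0 (sub_nonneg.mpr hz)))
    _ ≤ ∫⁻ z, ENNReal.ofReal (exp (t * (z - c))) ∂(gammaMeasure a r) :=
        setLIntegral_le_lintegral _ _
    _ = ENNReal.ofReal (exp (-(t * c)) * (r / (r - t)) ^ a) := by
        have : ∀ z : ℝ, ENNReal.ofReal (exp (t * (z - c)))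
            = ENNReal.ofReal (exp (-(t * c))) * ENNReal.ofReal (exp (t * z)) := by
          intro z
          rw [← ENNReal.ofReal_mul (exp_nonneg _), ← Real.exp_add]
          ring_nf
        simp_rw [this]
        rw [lintegral_const_mul _ (by fun_prop), gamma_mgf ha hr htr,
          ← ENNReal.ofReal_mul (exp_nonneg _)]

lemma gamma_lower_tail {a r t : ℝ} (ha : 0 < a) (hr : 0 < r) (ht0 : 0 ≤ t) (c : ℝ) :
    gammaMeasure a r {z | z ≤ c} ≤ ENNReal.ofReal (exp (t * c) * (r / (r + t)) ^ a) := by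
  have htr : -t < r := by linarith
  calc gammaMeasure a r {z | z ≤ c}
      = ∫⁻ z in {z | z ≤ c}, 1 ∂(gammaMeasure a r) := (setLIntegral_one _).symm
    _ ≤ ∫⁻ z in {z | z ≤ c}, ENNReal.ofReal (exp (-t * (z - c))) ∂(gammaMeasure a r) := by
        refine setLIntegral_mono (by fun_prop) fun z hz => ?_
        have hz' : z ≤ c := hz
        refine ENNReal.one_le_ofReal.mpr (Real.one_le_exp ?_)
        nlinarith
    _ ≤ ∫⁻ z, ENNReal.ofReal (exp (-t * (z - c))) ∂(gammaMeasure a r) :=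
        setLIntegral_le_lintegral _ _
    _ = ENNReal.ofReal (exp (t * c) * (r / (r + t)) ^ a) := by
        have : ∀ z : ℝ, ENNReal.ofReal (exp (-t * (z - c)))
            = ENNReal.ofReal (exp (t * c)) * ENNReal.ofReal (exp (-t * z)) := by
          intro z
          rw [← ENNReal.ofReal_mul (exp_nonneg _), ← Real.exp_add]
          ring_nf
        simp_rw [this]
        rw [lintegral_const_mul _ (by fun_prop), gamma_mgf ha hr htr,
          ← ENNReal.ofReal_mul (exp_nonneg _), sub_neg_eq_add]

lemma ineqA {s : ℝ} (hs : 0 ≤ s) : 1 + 2*s + 2*s^2 ≤ exp (2*s) := by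
  have := Real.sum_le_exp_of_nonneg (by linarith : (0:ℝ) ≤ 2*s) 3
  simp [Finset.sum_range_succ] at this
  nlinarith [this]

lemma ineqB {u : ℝ} (h0 : 0 ≤ u) (h1 : u < 1) : 1 - u ≤ exp (-u - u^2/2) := by
  set g : ℝ → ℝ := fun u => -Real.log (1-u) - u - u^2/2 with hg
  have key : ∀ v ∈ Set.Ico (0:ℝ) 1, HasDerivAt g (1/(1-v) - 1 - v) v := by
    intro v hv
    have h1v : (1:ℝ) - v ≠ 0 := sub_ne_zero.mpr (ne_of_lt hv.2).symm
    have hd1 : HasDerivAt (fun x : ℝ => Real.log (1-x)) ((1-v)⁻¹ * (-1)) v := by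
      exact
        (Real.hasDerivAt_log h1v).comp v ((hasDerivAt_id v).const_sub 1)
    have hd2 : HasDerivAt (fun x : ℝ => x^2/2) (v) v := by
      have := (hasDerivAt_pow 2 v).div_const 2
      simpa using this
    have := (hd1.neg.sub (hasDerivAt_id v)).sub hd2
    rw [show (1:ℝ)/(1-v) - 1 - v = -((1 - v)⁻¹ * -1) - 1 - v by ring]
    exact this
  have mono : MonotoneOn g (Set.Ico (0:ℝ) 1) := by
    refine monotoneOn_of_deriv_nonneg (convex_Ico 0 1)
      (fun v hv => (key v hv).continuousAt.continuousWithinAt)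
      (fun v hv => by
        rw [interior_Ico] at hv
        exact (key v (Set.Ioo_subset_Ico_self hv)).differentiableAt.differentiableWithinAt)
      (fun v hv => ?_)
    rw [interior_Ico] at hv
    rw [(key v (Set.Ioo_subset_Ico_self hv)).deriv]
    have h1v : (0:ℝ) < 1 - v := by linarith [hv.2]
    have : 1 + v ≤ 1/(1-v) := by
      rw [le_div_iff₀ h1v]; nlinarith [hv.1]
    linarith
  have h0g : g 0 ≤ g u := mono (by constructor <;> norm_num) ⟨h0, h1⟩ h0
  have hgu : 0 ≤ -Real.log (1-u) - u - u^2/2 := by simpa [hg] using h0g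
  have h1u : (0:ℝ) < 1 - u := by linarith
  calc 1 - u = exp (Real.log (1-u)) := (Real.exp_log h1u).symm
    _ ≤ exp (-u - u^2/2) := Real.exp_le_exp.mpr (by linarith)

end Aux

/-- Laurent–Massart chi-square concentration: if `Z ~ χ²_d` (the gamma distribution with
shape `d/2` and rate `1/2`), then for all `x > 0`,
`P(Z − d ≥ 2√(dx) + 2x) ≤ exp(−x)` and `P(d − Z ≥ 2√(dx)) ≤ exp(−x)`. -/
theorem chi_square_laurent_massart
    {Ω : Type*} [MeasurableSpace Ω] (μ : Measure Ω) [IsProbabilityMeasure μ]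
    (Z : Ω → ℝ) (d : ℕ) (hd : 0 < d)
    (hZ : μ.map Z = gammaMeasure ((d : ℝ) / 2) (1 / 2))
    (x : ℝ) (hx : 0 < x) :
    μ {ω | Z ω - d ≥ 2 * Real.sqrt (d * x) + 2 * x} ≤ ENNReal.ofReal (Real.exp (-x)) ∧
      μ {ω | (d : ℝ) - Z ω ≥ 2 * Real.sqrt (d * x)} ≤ ENNReal.ofReal (Real.exp (-x)) := by
  have hd0 : (0:ℝ) < d := Nat.cast_pos.mpr hd
  have ha : 0 < (d:ℝ)/2 := by positivity
  have hr : (0:ℝ) < 1/2 := by norm_num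
  have hprob : IsProbabilityMeasure (gammaMeasure ((d:ℝ)/2) (1/2)) :=
    isProbabilityMeasure_gammaMeasure ha hr
  have hZm : AEMeasurable Z μ := by
    by_contra h
    rw [Measure.map_of_not_aemeasurable h] at hZ
    have h1 := hprob.measure_univ
    rw [← hZ] at h1
    simp at h1
  set s : ℝ := Real.sqrt (x / d) with hs_def
  have hs : 0 < s := Real.sqrt_pos.mpr (div_pos hx hd0)
  have hs2 : s^2 = x / d := Real.sq_sqrt (div_nonneg hx.le hd0.le)
  have hxs : x = d * s^2 := by rw [hs2]; field_simp
  have hds : Real.sqrt (d * x) = d * s := by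
    rw [show (d:ℝ) * x = (d:ℝ)^2 * (x/d) by field_simp,
      Real.sqrt_mul (by positivity), Real.sqrt_sq hd0.le]
  constructor
  · -- upper tail
    set c : ℝ := (d:ℝ) + 2 * Real.sqrt (d * x) + 2 * x with hc_def
    have hc : 0 < c := by
      have := Real.sqrt_nonneg ((d:ℝ) * x); positivity
    have hset : {ω | Z ω - d ≥ 2 * Real.sqrt (d * x) + 2 * x} = Z ⁻¹' Set.Ici c := by
      ext ω
      simp only [Set.mem_setOf_eq, Set.mem_preimage, Set.mem_Ici, Set.mem_Iic, ge_iff_le, hc_def]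
      constructor <;> intro <;> linarith
    rw [hset, ← Measure.map_apply_of_aemeasurable hZm measurableSet_Ici, hZ]
    set t : ℝ := (c - (d:ℝ)) / (2 * c) with ht_def
    have hcd : (d:ℝ) ≤ c := by
      have := Real.sqrt_nonneg ((d:ℝ) * x); simp only [hc_def]; linarith
    have ht0 : 0 ≤ t := div_nonneg (by linarith) (by linarith)
    have htr : t < 1/2 := by
      rw [ht_def, div_lt_iff₀ (by linarith)]; linarith
    refine le_trans (gamma_upper_tail ha hr ht0 htr c) (ENNReal.ofReal_le_ofReal ?_)
    have htc : t * c = (c - d) / 2 := by rw [ht_def]; field_simp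
    have hrt : (1:ℝ)/2 - t = d / (2*c) := by rw [ht_def]; field_simp; ring
    have hratio : (1:ℝ)/2 / ((1:ℝ)/2 - t) = c / d := by
      rw [hrt]; field_simp
    have hcds : c / d = 1 + 2*s + 2*s^2 := by
      rw [hc_def, hds, hxs]; field_simp
    have h1 : (c/d) ^ ((d:ℝ)/2) ≤ exp ((d:ℝ)*s) := by
      rw [hcds]
      calc (1+2*s+2*s^2) ^ ((d:ℝ)/2) ≤ (exp (2*s)) ^ ((d:ℝ)/2) :=
            Real.rpow_le_rpow (by positivity) (ineqA hs.le) (by positivity)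
        _ = exp ((d:ℝ)*s) := by
            rw [Real.rpow_def_of_pos (Real.exp_pos _), Real.log_exp]; ring_nf
    have hcd2 : c - (d:ℝ) = 2*(d:ℝ)*s + 2*(d:ℝ)*s^2 := by
      rw [hc_def, hds, hxs]; ring
    calc exp (-(t*c)) * ((1:ℝ)/2 / ((1:ℝ)/2 - t)) ^ ((d:ℝ)/2)
        ≤ exp (-(t*c)) * exp ((d:ℝ)*s) := by
          rw [hratio]
          exact mul_le_mul_of_nonneg_left h1 (exp_nonneg _)
      _ = exp (-((d:ℝ)*s^2)) := by
          rw [← Real.exp_add, htc, hcd2]; ring_nf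
      _ = exp (-x) := by rw [hxs]
  · -- lower tail
    set c : ℝ := (d:ℝ) - 2 * Real.sqrt (d * x) with hc_def
    have hset : {ω | (d:ℝ) - Z ω ≥ 2 * Real.sqrt (d * x)} = Z ⁻¹' Set.Iic c := by
      ext ω
      simp only [Set.mem_setOf_eq, Set.mem_preimage, Set.mem_Ici, Set.mem_Iic, ge_iff_le, hc_def]
      constructor <;> intro <;> linarith
    rw [hset, ← Measure.map_apply_of_aemeasurable hZm measurableSet_Iic, hZ]
    rcases le_or_gt c 0 with hc0 | hc0
    · have : gammaMeasure ((d:ℝ)/2) (1/2) (Set.Iic c)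
          ≤ gammaMeasure ((d:ℝ)/2) (1/2) (Set.Iic 0) :=
        measure_mono (fun z hz => le_trans hz hc0)
      have hzero : gammaMeasure ((d:ℝ)/2) (1/2) (Set.Iic 0) = 0 := by
        rw [gammaMeasure, withDensity_apply _ measurableSet_Iic,
          setLIntegral_congr (Iio_ae_eq_Iic (a := (0:ℝ))).symm]
        exact lintegral_gammaPDF_of_nonpos le_rfl
      rw [hzero] at this
      exact le_trans this zero_le
    · set t : ℝ := ((d:ℝ) - c) / (2 * c) with ht_def
      have hcd : c < (d:ℝ) := by
        rw [hc_def, hds]; nlinarith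
      have ht0 : 0 ≤ t := div_nonneg (by linarith) (by linarith)
      refine le_trans (gamma_lower_tail ha hr ht0 c) (ENNReal.ofReal_le_ofReal ?_)
      have htc : t * c = ((d:ℝ) - c) / 2 := by rw [ht_def]; field_simp
      have hrt : (1:ℝ)/2 + t = d / (2*c) := by rw [ht_def]; field_simp; ring
      have hratio : (1:ℝ)/2 / ((1:ℝ)/2 + t) = c / d := by rw [hrt]; field_simp
      have hs12 : 2*s < 1 := by
        have : (d:ℝ) * (2*s) < (d:ℝ) * 1 := by
          rw [hc_def, hds] at hc0; nlinarith
        exact lt_of_mul_lt_mul_left this hd0.le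
      have hcds : c / d = 1 - 2*s := by
        rw [hc_def, hds]; field_simp
      have h1 : (c/d) ^ ((d:ℝ)/2) ≤ exp (-(d:ℝ)*s - (d:ℝ)*s^2) := by
        rw [hcds]
        have hB := ineqB (u := 2*s) (by linarith) hs12
        calc (1 - 2*s) ^ ((d:ℝ)/2)
            ≤ (exp (-(2*s) - (2*s)^2/2)) ^ ((d:ℝ)/2) :=
              Real.rpow_le_rpow (by linarith) hB (by positivity)
          _ = exp (-(d:ℝ)*s - (d:ℝ)*s^2) := by
              rw [Real.rpow_def_of_pos (Real.exp_pos _), Real.log_exp]; ring_nf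
      calc exp (t*c) * ((1:ℝ)/2 / ((1:ℝ)/2 + t)) ^ ((d:ℝ)/2)
          ≤ exp (t*c) * exp (-(d:ℝ)*s - (d:ℝ)*s^2) := by
            rw [hratio]
            exact mul_le_mul_of_nonneg_left h1 (exp_nonneg _)
        _ = exp (t*c - (d:ℝ)*s - (d:ℝ)*s^2) := by rw [← Real.exp_add]; ring_nf
        _ = exp (-x) := by
            rw [htc, hc_def, hds, hxs]; ring_nf
end
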